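/- Let (M_f(𝕋), d_BL) be the space of finite Borel measures on the circle with the bounded-Lipschitz metric, {ν_x^B} fiber measures of graphops B ∈ 𝒢 (all with γ_B ≤ 1), and define on M̄^b := { measurable μ̄: Ω → M_f(𝕋) with sup_x μ^x(𝕋) ≤ b } the function d̄^b(μ̄,κ̄) := sup_{B∈𝒢} sup_{x∈Ω} ∫_Ω d_BL(μ^y,κ^y) dν_x^B(y). Then d̄^b takes finite values: 0 ≤ d̄^b(μ̄,κ̄) ≤ b·diam(𝕋), and d̄^b is a metric on M̄^b (symmetric, triangle inequality, and d̄^b(μ̄,κ̄) = 0 implies μ^y = κ^y for all y). -/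

import Mathlib

open MeasureTheory
open scoped ENNReal NNReal

instance : Fact (0 < 2 * Real.pi) := ⟨by positivity⟩

noncomputable abbrev Circle2pi := AddCircle (2 * Real.pi)

/-- The bounded-Lipschitz distance on finite measures on the circle. -/
noncomputable def dBL (μ κ : Measure Circle2pi) : ℝ :=
  ⨆ f : {f : Circle2pi → ℝ // LipschitzWith 1 f ∧ ∀ v, f v ∈ Set.Icc (0:ℝ) 1},
    |(∫ v, f.1 v ∂μ) - ∫ v, f.1 v ∂κ|

/-- The collection `𝒢` of fiber-measure families of graphops `B` (over an arbitrary
probability measure `l` on `Ω`, self-adjoint, with degree bound `γ_B ≤ 1`). -/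
def GraphopFibers (Ω : Type*) [MeasurableSpace Ω] : Set (Ω → Measure Ω) :=
  {η | (∀ x, η x Set.univ ≤ 1) ∧
    ∃ l : Measure Ω, IsProbabilityMeasure l ∧
      ∀ S S' : Set Ω, MeasurableSet S → MeasurableSet S' →
        ∫⁻ x in S, η x S' ∂l = ∫⁻ x in S', η x S ∂l}

/-- The candidate metric `d̄^b(μ̄,κ̄) = sup_{B∈𝒢} sup_{x∈Ω} ∫_Ω d_BL(μ^y,κ^y) dν_x^B(y)`. -/
noncomputable def dbarb {Ω : Type*} [MeasurableSpace Ω]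
    (μ κ : Ω → Measure Circle2pi) : ℝ :=
  ⨆ η : GraphopFibers Ω, ⨆ x : Ω, ∫ y, dBL (μ y) (κ y) ∂(η.1 x)

/-!
Symmetry, the triangle inequality and the bound `d̄^b ≤ b ≤ b · π = b · diam 𝕋` pass
fibrewise from `d_BL`, a pseudometric bounded by the total masses, through integration against
the fibres `ν_x`, which have mass at most `1`. For the identity of indiscernibles, the graphop
`x ↦ δ_x` (the identity operator) turns `∫ d_BL(μ^y, κ^y) dν_x(y)` into `d_BL(μ^x, κ^x)`; and
`d_BL` separates finite measures because rescaled thickened indicators of a closed set are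
admissible test functions converging to its indicator.
-/

open Set

section UnitIntervalValued

variable {X : Type*} [MeasurableSpace X] {μ κ : Measure X}

theorem integral_le_measureReal_univ [IsFiniteMeasure μ] {f : X → ℝ} (hf : ∀ x, f x ∈ Icc 0 1) :
    ∫ x, f x ∂μ ≤ μ.real univ := by
  calc ∫ x, f x ∂μ ≤ ∫ _, (1 : ℝ) ∂μ :=
        integral_mono_of_nonneg (ae_of_all _ fun x => (hf x).1) (integrable_const 1)
          (ae_of_all _ fun x => (hf x).2)
    _ = μ.real univ := by simp

theorem abs_integral_sub_integral_le [IsFiniteMeasure μ] [IsFiniteMeasure κ]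
    {f : X → ℝ} (hf : ∀ x, f x ∈ Icc 0 1) {b : ℝ}
    (hμ : μ.real univ ≤ b) (hκ : κ.real univ ≤ b) :
    |∫ x, f x ∂μ - ∫ x, f x ∂κ| ≤ b :=
  abs_sub_le_of_nonneg_of_le (integral_nonneg fun x => (hf x).1)
    ((integral_le_measureReal_univ hf).trans hμ) (integral_nonneg fun x => (hf x).1)
    ((integral_le_measureReal_univ hf).trans hκ)

end UnitIntervalValued

section LipschitzTest

variable {X : Type*} [PseudoMetricSpace X] [MeasurableSpace X] {μ κ : Measure X}

theorem integral_thickenedIndicator_eq_of_forall_lipschitzWith_integral_eq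
    (h : ∀ f : X → ℝ, LipschitzWith 1 f → (∀ x, f x ∈ Icc 0 1) → ∫ x, f x ∂μ = ∫ x, f x ∂κ)
    {δ : ℝ} (hδ : 0 < δ) (hδ1 : δ ≤ 1) (F : Set X) :
    ∫ x, (thickenedIndicator hδ F x : ℝ) ∂μ = ∫ x, (thickenedIndicator hδ F x : ℝ) ∂κ := by
  have hK : ‖δ‖₊ * (1 * δ.toNNReal⁻¹) = 1 := by
    rw [one_mul, Real.nnnorm_of_nonneg hδ.le, ← Real.toNNReal_of_nonneg hδ.le,
      mul_inv_cancel₀ (by simpa using hδ)]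
  have hlip : LipschitzWith 1 fun x => δ * (thickenedIndicator hδ F x : ℝ) := hK ▸
    (lipschitzWith_smul δ).comp
      ((LipschitzWith.subtype_val _).comp (lipschitzWith_thickenedIndicator hδ F))
  have hmem : ∀ x, δ * (thickenedIndicator hδ F x : ℝ) ∈ Icc 0 1 := fun x =>
    ⟨by positivity,
      mul_le_one₀ hδ1 (by positivity) (by exact_mod_cast thickenedIndicator_le_one hδ F x)⟩
  have := h _ hlip hmem
  rwa [integral_const_mul, integral_const_mul, mul_right_inj' hδ.ne'] at this

theorem Measure.ext_of_forall_lipschitzWith_integral_eq [BorelSpace X]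
    [IsFiniteMeasure μ] [IsFiniteMeasure κ]
    (h : ∀ f : X → ℝ, LipschitzWith 1 f → (∀ x, f x ∈ Icc 0 1) → ∫ x, f x ∂μ = ∫ x, f x ∂κ) :
    μ = κ := by
  have hclosed (F : Set X) (hF : IsClosed F) : μ F = κ F := by
    have hδ (n : ℕ) : (0 : ℝ) < 1 / (n + 1) := Nat.one_div_pos_of_nat
    have hδ1 (n : ℕ) : (1 : ℝ) / (n + 1) ≤ 1 := div_le_one_of_le₀ (by simp) (by positivity)
    have hμF := tendsto_integral_thickenedIndicator_of_isClosed μ hF hδ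
      tendsto_one_div_add_atTop_nhds_zero_nat
    have hκF := tendsto_integral_thickenedIndicator_of_isClosed κ hF hδ
      tendsto_one_div_add_atTop_nhds_zero_nat
    simp_rw [integral_thickenedIndicator_eq_of_forall_lipschitzWith_integral_eq h (hδ _)
      (hδ1 _)] at hμF
    exact (measureReal_eq_measureReal_iff).1 (tendsto_nhds_unique hμF hκF)
  refine ext_of_generate_finite _ ?_ isPiSystem_isClosed hclosed (hclosed _ isClosed_univ)
  rw [BorelSpace.measurable_eq (α := X), borel_eq_generateFrom_isClosed]

end LipschitzTest

section BoundedLipschitz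

variable {μ κ ρ : Measure Circle2pi}

abbrev BLTestFunction :=
  Subtype fun f : Circle2pi → ℝ => LipschitzWith 1 f ∧ ∀ v, f v ∈ Icc (0 : ℝ) 1

instance : Nonempty BLTestFunction :=
  ⟨⟨fun _ => 0, LipschitzWith.const' 0, fun _ => ⟨le_rfl, zero_le_one⟩⟩⟩

theorem dBL_nonneg (μ κ : Measure Circle2pi) : 0 ≤ dBL μ κ :=
  Real.iSup_nonneg fun _ => abs_nonneg _

theorem dBL_comm (μ κ : Measure Circle2pi) : dBL μ κ = dBL κ μ :=
  iSup_congr fun _ => abs_sub_comm _ _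

theorem dBL_le [IsFiniteMeasure μ] [IsFiniteMeasure κ] {b : ℝ}
    (hμ : μ.real univ ≤ b) (hκ : κ.real univ ≤ b) : dBL μ κ ≤ b :=
  ciSup_le fun f => abs_integral_sub_integral_le f.2.2 hμ hκ

theorem abs_integral_sub_integral_le_dBL [IsFiniteMeasure μ] [IsFiniteMeasure κ]
    {f : Circle2pi → ℝ} (hf : LipschitzWith 1 f) (hf01 : ∀ v, f v ∈ Icc 0 1) :
    |∫ v, f v ∂μ - ∫ v, f v ∂κ| ≤ dBL μ κ := by
  have hbdd : BddAbove (range fun g : BLTestFunction => |∫ v, g.1 v ∂μ - ∫ v, g.1 v ∂κ|) :=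
    ⟨_, forall_mem_range.2 fun g => abs_integral_sub_integral_le g.2.2
      (le_max_left (μ.real univ) (κ.real univ)) (le_max_right _ _)⟩
  exact le_ciSup hbdd ⟨f, hf, hf01⟩

theorem dBL_triangle [IsFiniteMeasure μ] [IsFiniteMeasure κ] [IsFiniteMeasure ρ] :
    dBL μ ρ ≤ dBL μ κ + dBL κ ρ :=
  ciSup_le fun f => (abs_sub_le _ _ _).trans <| add_le_add
    (abs_integral_sub_integral_le_dBL f.2.1 f.2.2) (abs_integral_sub_integral_le_dBL f.2.1 f.2.2)

theorem eq_of_dBL_eq_zero [IsFiniteMeasure μ] [IsFiniteMeasure κ] (h : dBL μ κ = 0) : μ = κ :=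
  Measure.ext_of_forall_lipschitzWith_integral_eq fun _ hf hf01 =>
    sub_eq_zero.1 <| abs_nonpos_iff.1 <| h ▸ abs_integral_sub_integral_le_dBL hf hf01

end BoundedLipschitz

theorem one_le_diam_circle2pi : 1 ≤ Metric.diam (univ : Set Circle2pi) := by
  have hπ : dist ((2 * Real.pi / 2 : ℝ) : Circle2pi) 0 = Real.pi := by
    rw [dist_zero_right, AddCircle.norm_half_period_eq, abs_of_pos Real.two_pi_pos]
    ring
  calc (1 : ℝ) ≤ Real.pi := by linarith [Real.pi_gt_three]
    _ = _ := hπ.symm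
    _ ≤ _ := Metric.dist_le_diam_of_mem isCompact_univ.isBounded (mem_univ _) (mem_univ _)

section Graphop

variable {Ω : Type*} [MeasurableSpace Ω]

theorem dirac_mem_graphopFibers [Nonempty Ω] : Measure.dirac ∈ GraphopFibers Ω := by
  refine ⟨fun x => by simp, Measure.dirac (Classical.arbitrary Ω), inferInstance,
    fun S S' hS hS' => ?_⟩
  simp_rw [Measure.dirac_apply' _ hS', Measure.dirac_apply' _ hS]
  rw [lintegral_indicator_one hS', lintegral_indicator_one hS, Measure.restrict_apply hS',
    Measure.restrict_apply hS, inter_comm]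

variable {η : Ω → Measure Ω} {D : Ω → ℝ} {c : ℝ}

theorem isFiniteMeasure_of_mem_graphopFibers (hη : η ∈ GraphopFibers Ω) (x : Ω) :
    IsFiniteMeasure (η x) :=
  ⟨(hη.1 x).trans_lt ENNReal.one_lt_top⟩

theorem integrable_of_mem_graphopFibers (hη : η ∈ GraphopFibers Ω) (hm : Measurable D)
    (hD0 : ∀ y, 0 ≤ D y) (hDc : ∀ y, D y ≤ c) (x : Ω) : Integrable D (η x) :=
  have := isFiniteMeasure_of_mem_graphopFibers hη x
  .of_bound hm.aestronglyMeasurable c <| ae_of_all _ fun y => by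
    rw [Real.norm_of_nonneg (hD0 y)]
    exact hDc y

theorem integral_le_of_mem_graphopFibers (hη : η ∈ GraphopFibers Ω)
    (hD0 : ∀ y, 0 ≤ D y) (hDc : ∀ y, D y ≤ c) (x : Ω) : ∫ y, D y ∂η x ≤ c := by
  have := isFiniteMeasure_of_mem_graphopFibers hη x
  calc ∫ y, D y ∂η x ≤ ∫ _, c ∂η x :=
        integral_mono_of_nonneg (ae_of_all _ hD0) (integrable_const c) (ae_of_all _ hDc)
    _ = (η x).real univ * c := by rw [integral_const, smul_eq_mul]
    _ ≤ 1 * c := by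
        gcongr
        · exact (hD0 x).trans (hDc x)
        · exact ENNReal.toReal_le_of_le_ofReal zero_le_one (by simpa using hη.1 x)
    _ = c := one_mul c

end Graphop

section Dbarb

variable {Ω : Type*} [MeasurableSpace Ω] {μ κ ρ : Ω → Measure Circle2pi} {c : ℝ}

theorem dbarb_nonneg (μ κ : Ω → Measure Circle2pi) : 0 ≤ dbarb μ κ :=
  Real.iSup_nonneg fun _ => Real.iSup_nonneg fun _ => integral_nonneg fun _ => dBL_nonneg _ _

theorem dbarb_comm (μ κ : Ω → Measure Circle2pi) : dbarb μ κ = dbarb κ μ := by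
  simp_rw [dbarb, dBL_comm (μ _)]

theorem dbarb_le (hc0 : 0 ≤ c) (hc : ∀ y, dBL (μ y) (κ y) ≤ c) : dbarb μ κ ≤ c :=
  Real.iSup_le (fun η => Real.iSup_le
    (integral_le_of_mem_graphopFibers η.2 (fun _ => dBL_nonneg _ _) hc) hc0) hc0

theorem integral_le_dbarb (hc : ∀ y, dBL (μ y) (κ y) ≤ c) (η : GraphopFibers Ω) (x : Ω) :
    ∫ y, dBL (μ y) (κ y) ∂η.1 x ≤ dbarb μ κ := by
  have hc0 : 0 ≤ c := (dBL_nonneg _ _).trans (hc x)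
  have hinner (η' : GraphopFibers Ω) :
      BddAbove (range fun x => ∫ y, dBL (μ y) (κ y) ∂η'.1 x) :=
    ⟨c, forall_mem_range.2 (integral_le_of_mem_graphopFibers η'.2 (fun _ => dBL_nonneg _ _) hc)⟩
  have houter : BddAbove (range fun η' : GraphopFibers Ω =>
      ⨆ x, ∫ y, dBL (μ y) (κ y) ∂η'.1 x) :=
    ⟨c, forall_mem_range.2 fun η' => Real.iSup_le
      (integral_le_of_mem_graphopFibers η'.2 (fun _ => dBL_nonneg _ _) hc) hc0⟩
  exact (le_ciSup (hinner η) x).trans (le_ciSup houter η)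

theorem dbarb_triangle [∀ y, IsFiniteMeasure (μ y)] [∀ y, IsFiniteMeasure (κ y)]
    [∀ y, IsFiniteMeasure (ρ y)]
    (hμκ : ∀ y, dBL (μ y) (κ y) ≤ c) (hκρ : ∀ y, dBL (κ y) (ρ y) ≤ c)
    (hmμκ : Measurable fun y => dBL (μ y) (κ y)) (hmκρ : Measurable fun y => dBL (κ y) (ρ y)) :
    dbarb μ ρ ≤ dbarb μ κ + dbarb κ ρ := by
  refine Real.iSup_le (fun η => Real.iSup_le (fun x => ?_) ?_) ?_
  · have hμκ_int := integrable_of_mem_graphopFibers η.2 hmμκ (fun _ => dBL_nonneg _ _) hμκ x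
    have hκρ_int := integrable_of_mem_graphopFibers η.2 hmκρ (fun _ => dBL_nonneg _ _) hκρ x
    calc ∫ y, dBL (μ y) (ρ y) ∂η.1 x
        ≤ ∫ y, (dBL (μ y) (κ y) + dBL (κ y) (ρ y)) ∂η.1 x :=
          integral_mono_of_nonneg (ae_of_all _ fun _ => dBL_nonneg _ _)
            (hμκ_int.add hκρ_int) (ae_of_all _ fun _ => dBL_triangle)
      _ = ∫ y, dBL (μ y) (κ y) ∂η.1 x + ∫ y, dBL (κ y) (ρ y) ∂η.1 x :=
          integral_add hμκ_int hκρ_int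
      _ ≤ dbarb μ κ + dbarb κ ρ :=
          add_le_add (integral_le_dbarb hμκ η x) (integral_le_dbarb hκρ η x)
  all_goals exact add_nonneg (dbarb_nonneg μ κ) (dbarb_nonneg κ ρ)

theorem dBL_eq_zero_of_dbarb_eq_zero (hc : ∀ y, dBL (μ y) (κ y) ≤ c)
    (hm : Measurable fun y => dBL (μ y) (κ y)) (h : dbarb μ κ = 0) (y : Ω) :
    dBL (μ y) (κ y) = 0 := by
  have : Nonempty Ω := ⟨y⟩
  have hy := integral_le_dbarb hc ⟨_, dirac_mem_graphopFibers⟩ y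
  rw [integral_dirac' _ y hm.stronglyMeasurable, h] at hy
  exact hy.antisymm (dBL_nonneg _ _)

end Dbarb

theorem dbarb_is_metric_general
    {Ω : Type*} [MeasurableSpace Ω]
    (b : ℝ) (hb : 0 < b)
    (μ κ ρ : Ω → Measure Circle2pi)
    [∀ y, IsFiniteMeasure (μ y)] [∀ y, IsFiniteMeasure (κ y)] [∀ y, IsFiniteMeasure (ρ y)]
    (hμb : ∀ y, μ y Set.univ ≤ ENNReal.ofReal b)
    (hκb : ∀ y, κ y Set.univ ≤ ENNReal.ofReal b)
    (hρb : ∀ y, ρ y Set.univ ≤ ENNReal.ofReal b)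
    (hmμκ : Measurable fun y => dBL (μ y) (κ y))
    (hmκρ : Measurable fun y => dBL (κ y) (ρ y)) :
    (0 ≤ dbarb μ κ) ∧
    (dbarb μ κ ≤ b * Metric.diam (Set.univ : Set Circle2pi)) ∧
    (dbarb μ κ = dbarb κ μ) ∧
    (dbarb μ ρ ≤ dbarb μ κ + dbarb κ ρ) ∧
    (dbarb μ κ = 0 → ∀ y, μ y = κ y) := by
  have hmass {ν : Ω → Measure Circle2pi} (hν : ∀ y, ν y univ ≤ ENNReal.ofReal b) (y : Ω) :
      (ν y).real univ ≤ b :=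
    ENNReal.toReal_le_of_le_ofReal hb.le (hν y)
  have hμκ (y : Ω) : dBL (μ y) (κ y) ≤ b := dBL_le (hmass hμb y) (hmass hκb y)
  have hκρ (y : Ω) : dBL (κ y) (ρ y) ≤ b := dBL_le (hmass hκb y) (hmass hρb y)
  refine ⟨dbarb_nonneg μ κ, ?_, dbarb_comm μ κ, dbarb_triangle hμκ hκρ hmμκ hmκρ, ?_⟩
  · exact (dbarb_le hb.le hμκ).trans (le_mul_of_one_le_right hb.le one_le_diam_circle2pi)
  · exact fun h y => eq_of_dBL_eq_zero (dBL_eq_zero_of_dbarb_eq_zero hμκ hmμκ h y)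

/-- `d̄^b` takes finite values in `[0, b·diam 𝕋]` on families with mass
bound `b`, is symmetric, satisfies the triangle inequality, and vanishes only on equal
families: it is a metric on `M̄^b`. -/
theorem dbarb_is_metric
    {Ω : Type*} [MeasurableSpace Ω] [Nonempty Ω]
    (b : ℝ) (hb : 0 < b)
    (μ κ ρ : Ω → Measure Circle2pi)
    [∀ y, IsFiniteMeasure (μ y)] [∀ y, IsFiniteMeasure (κ y)] [∀ y, IsFiniteMeasure (ρ y)]
    (hμb : ∀ y, μ y Set.univ ≤ ENNReal.ofReal b)
    (hκb : ∀ y, κ y Set.univ ≤ ENNReal.ofReal b)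
    (hρb : ∀ y, ρ y Set.univ ≤ ENNReal.ofReal b)
    (hmμκ : Measurable fun y => dBL (μ y) (κ y))
    (hmμρ : Measurable fun y => dBL (μ y) (ρ y))
    (hmκρ : Measurable fun y => dBL (κ y) (ρ y)) :
    (0 ≤ dbarb μ κ) ∧
    (dbarb μ κ ≤ b * Metric.diam (Set.univ : Set Circle2pi)) ∧
    (dbarb μ κ = dbarb κ μ) ∧
    (dbarb μ ρ ≤ dbarb μ κ + dbarb κ ρ) ∧
    (dbarb μ κ = 0 → ∀ y, μ y = κ y) :=
  dbarb_is_metric_general b hb μ κ ρ hμb hκb hρb hmμκ hmκρ
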